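/- arXiv:1002.2720 — 2 statements merged into one kernel-verified Lean document; each statement's English description precedes it below -/
import Mathlib

section
/- Let h₁, h₂, h₃ ∈ ℂ^{1×3} be linearly independent row vectors. Let B be the 8×6 matrix whose rows are: row r = (h_r, 0, 0, 0) for r = 1, 2, 3; row 3+r = (0, 0, 0, h_r) for r = 1, 2, 3; rows 7, 8 zero. Let v₁ = (1, 0, 0, 1, 0, 0, 1, 0)ᵀ and v₂ = (0, 1, 0, 0, 1, 0, 0, 1)ᵀ. Then the 8×8 matrix [B | v₁ | v₂] obtained by adjoining v₁ and v₂ as the last two columns of B is invertible. -/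
/-!
Splitting the indices as `8 = 3 + 3 + 2`, the matrix `[B | v₁ | v₂]` is block upper triangular
with diagonal blocks `H`, `H`, `1`, where `H` is the `3 × 3` matrix with rows `h₁, h₂, h₃`.
It is therefore invertible as soon as `H` is, i.e. as soon as the `hᵢ` are linearly independent.
-/

open Matrix

variable {K : Type*}

def desiredSignalMatrix [Zero K] (h : Fin 3 → Fin 3 → K) : Matrix (Fin 8) (Fin 6) K :=
  Matrix.of fun r c =>
    if hr : (r : ℕ) < 3 then
      (if hc : (c : ℕ) < 3 then h ⟨(r : ℕ), hr⟩ ⟨(c : ℕ), hc⟩ else 0)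
    else if hr6 : (r : ℕ) < 6 then
      (if hc : 3 ≤ (c : ℕ) then
        h ⟨(r : ℕ) - 3, Nat.sub_lt_left_of_lt_add (not_lt.mp hr) hr6⟩
          ⟨(c : ℕ) - 3, Nat.sub_lt_left_of_lt_add hc c.isLt⟩ else 0)
    else 0

def signalInterferenceMatrix [Zero K] [One K] (B : Matrix (Fin 8) (Fin 6) K) :
    Matrix (Fin 8) (Fin 8) K :=
  Matrix.of fun r c =>
    if hc : (c : ℕ) < 6 then B r ⟨(c : ℕ), hc⟩
    else if (c : ℕ) = 6 then (![1, 0, 0, 1, 0, 0, 1, 0] : Fin 8 → K) r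
    else (![0, 1, 0, 0, 1, 0, 0, 1] : Fin 8 → K) r

def blockEquiv : (Fin 3 ⊕ Fin 3) ⊕ Fin 2 ≃ Fin 8 :=
  (finSumFinEquiv.sumCongr (Equiv.refl _)).trans finSumFinEquiv

lemma submatrix_blockEquiv_signalInterferenceMatrix [Zero K] [One K]
    (h : Fin 3 → Fin 3 → K) :
    (signalInterferenceMatrix (desiredSignalMatrix h)).submatrix blockEquiv blockEquiv =
      fromBlocks (fromBlocks (of h) 0 0 (of h))
        (fromRows !![1, 0; 0, 1; 0, 0] !![1, 0; 0, 1; 0, 0]) 0 1 := by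
  ext ((i | i) | i) ((j | j) | j) <;> fin_cases i <;> fin_cases j <;> rfl

lemma isUnit_signalInterferenceMatrix [CommRing K] {h : Fin 3 → Fin 3 → K}
    (hh : IsUnit (of h)) : IsUnit (signalInterferenceMatrix (desiredSignalMatrix h)) := by
  rw [← isUnit_submatrix_equiv blockEquiv blockEquiv,
    submatrix_blockEquiv_signalInterferenceMatrix]
  simp only [isUnit_fromBlocks_zero₂₁]
  exact ⟨⟨hh, hh⟩, isUnit_one⟩

/-- Adjoining the aligned interference directions `v₁ = (1,0,0,1,0,0,1,0)ᵀ` and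
`v₂ = (0,1,0,0,1,0,0,1)ᵀ` to the `8×6` desired-signal matrix `B` of user 1 in the
2-user `3×1` MISO BC yields an invertible `8×8` matrix, whenever the channel rows
`h₁, h₂, h₃` (here `h 0, h 1, h 2`) are linearly independent. -/
theorem two_user_3x1_MISO_BC_signal_interference_independent
    (h : Fin 3 → Fin 3 → ℂ) (hli : LinearIndependent ℂ h)
    (B : Matrix (Fin 8) (Fin 6) ℂ)
    (hB : ∀ (r : Fin 8) (c : Fin 6), B r c =
      if hr : (r : ℕ) < 3 then
        (if hc : (c : ℕ) < 3 then h ⟨(r : ℕ), hr⟩ ⟨(c : ℕ), hc⟩ else 0)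
      else if hr6 : (r : ℕ) < 6 then
        (if hc : 3 ≤ (c : ℕ) then
          h ⟨(r : ℕ) - 3, by omega⟩ ⟨(c : ℕ) - 3, by have := c.isLt; omega⟩ else 0)
      else 0) :
    IsUnit (Matrix.of (fun (r : Fin 8) (c : Fin 8) =>
      if hc : (c : ℕ) < 6 then B r ⟨(c : ℕ), hc⟩
      else if (c : ℕ) = 6 then (![1, 0, 0, 1, 0, 0, 1, 0] : Fin 8 → ℂ) r
      else (![0, 1, 0, 0, 1, 0, 0, 1] : Fin 8 → ℂ) r)) := by
  obtain rfl : B = desiredSignalMatrix h := Matrix.ext hB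
  exact isUnit_signalInterferenceMatrix (linearIndependent_rows_iff_isUnit.mp hli)
end

section
/- Let M ≥ 2, K ≥ 2 and let h₁, …, h_M ∈ ℂ^{1×M} be linearly independent row vectors. Consider the (K(M−1)+1) × (M + (K−1)(M−1)) complex matrix G defined in blocks as follows: rows 1, …, M−1 are [h_r | e_rᵀ | e_rᵀ | ⋯ | e_rᵀ] for r = 1, …, M−1 (first M columns equal h_r, followed by K−1 copies of the r-th standard basis row of length M−1); for j = 1, …, K−1, rows (M−1)j+1, …, (M−1)(j+1) are [0 | 0 | ⋯ | I_{M−1} | ⋯ | 0] with the (M−1)×(M−1) identity in block position j among the K−1 trailing blocks and zeros elsewhere; and the last row is [h_M | 0 | ⋯ | 0]. Then G has full column rank M + (K−1)(M−1). -/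
/-!
A vector `v` in the kernel of `G` splits as `v = (x, y)` with `x` on the `M` desired columns and
`y` on the `(K−1)(M−1)` interference columns. Each interference column `c` has a row of `G` that is
the unit row vector at `c` (the `I_{M−1}` blocks), so `y = 0`. The remaining rows `1, …, M−1` and
the last one then read `hᵢ · x = 0`, and `x = 0` because the `hᵢ` are linearly independent.
-/

theorem Nat.eq_of_div_eq_of_mod_eq {x y d : ℕ} (hdiv : x / d = y / d) (hmod : x % d = y % d) :
    x = y := by
  rw [← Nat.div_add_mod x d, hdiv, hmod, Nat.div_add_mod]

namespace Matrix

variable {R : Type*} [CommRing R]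

theorem rank_eq_card_of_mulVec_injective [StrongRankCondition R] {m n : Type*} [Fintype n]
    {A : Matrix m n R} (hA : Function.Injective A.mulVec) : A.rank = Fintype.card n := by
  rw [rank, LinearMap.finrank_range_of_inj hA, Module.finrank_fintype_fun_eq_card]

theorem mulVec_injective_of_rows_eq_single {ι m : Type*} {a b : ℕ} (A : Matrix m (Fin (a + b)) R)
    (left : ι → m) (hleft : Function.Injective (A.submatrix left (Fin.castAdd b)).mulVec)
    (single : Fin b → m) (hsingle : ∀ t, A (single t) = Pi.single (Fin.natAdd a t) 1) :
    Function.Injective A.mulVec := by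
  refine (injective_iff_map_eq_zero A.mulVecLin).2 fun v hv => ?_
  have hright : ∀ t, v (Fin.natAdd a t) = 0 := fun t => by
    simpa [mulVec, hsingle] using congrFun hv (single t)
  have hleft_zero : (A.submatrix left (Fin.castAdd b)) *ᵥ (v ∘ Fin.castAdd b) = 0 := by
    funext i
    simpa [mulVec, dotProduct, Fin.sum_univ_add, hright] using congrFun hv (left i)
  have hx : v ∘ Fin.castAdd b = 0 := hleft (hleft_zero.trans (mulVec_zero _).symm)
  funext c
  exact Fin.addCases (fun c => congrFun hx c) hright c

end Matrix

variable {R : Type*} [Zero R] [One R]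

def alignmentBlock (M K : ℕ) (h : Fin M → Fin M → R) :
    Matrix (Fin (K * (M - 1) + 1)) (Fin (M + (K - 1) * (M - 1))) R :=
  Matrix.of fun r c =>
    if hr : (r : ℕ) < M - 1 then
      (if hc : (c : ℕ) < M then h ⟨(r : ℕ), by omega⟩ ⟨(c : ℕ), hc⟩
       else (if ((c : ℕ) - M) % (M - 1) = (r : ℕ) then 1 else 0))
    else if hr2 : (r : ℕ) < K * (M - 1) then
      (if M ≤ (c : ℕ) ∧ ((c : ℕ) - M) / (M - 1) + 1 = (r : ℕ) / (M - 1) ∧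
          ((c : ℕ) - M) % (M - 1) = (r : ℕ) % (M - 1)
       then 1 else 0)
    else
      (if hc : (c : ℕ) < M then h ⟨M - 1, by omega⟩ ⟨(c : ℕ), hc⟩ else 0)

namespace alignmentBlock

def desiredRow {M K : ℕ} (hK : 1 ≤ K) (i : Fin M) : Fin (K * (M - 1) + 1) :=
  if hi : (i : ℕ) < M - 1 then ⟨i, by have := Nat.le_mul_of_pos_left (M - 1) hK; omega⟩
  else Fin.last _

/-- Row `s` of the `j`-th identity block sits at `(j + 1)(M − 1) + s`, which is `M − 1 + t` for the
interference column `t = j(M − 1) + s`. -/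
def interferenceRow (M K : ℕ) (t : Fin ((K - 1) * (M - 1))) : Fin (K * (M - 1) + 1) :=
  ⟨M - 1 + t, by have := t.isLt; have := Nat.sub_one_mul K (M - 1); omega⟩

theorem apply_desiredRow_castAdd {M K : ℕ} (hK : 1 ≤ K) (h : Fin M → Fin M → R) (i c : Fin M) :
    alignmentBlock M K h (desiredRow hK i) (Fin.castAdd _ c) = h i c := by
  have hMK := Nat.le_mul_of_pos_left (M - 1) hK
  unfold desiredRow
  split_ifs with hi
  · simp [alignmentBlock, hi]
  · have hlast : i = ⟨M - 1, by omega⟩ := Fin.ext (show (i : ℕ) = M - 1 by omega)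
    simp [alignmentBlock, hlast, hMK.not_gt]

theorem interferenceRow_eq_single {M K : ℕ} (h : Fin M → Fin M → R)
    (t : Fin ((K - 1) * (M - 1))) :
    alignmentBlock M K h (interferenceRow M K t) = Pi.single (Fin.natAdd M t) 1 := by
  have hd : 0 < M - 1 := Nat.pos_of_ne_zero (right_ne_zero_of_mul t.pos.ne')
  have ht := t.isLt
  have hMK := Nat.sub_one_mul K (M - 1)
  funext c
  simp only [alignmentBlock, interferenceRow, Matrix.of_apply, Pi.single_apply, Fin.ext_iff,
    Fin.val_natAdd, Nat.add_div_left _ hd, Nat.add_mod_left]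
  rw [dif_neg (by omega), dif_pos (by omega)]
  refine if_congr ⟨fun ⟨hc, hdiv, hmod⟩ => ?_, fun hc => ?_⟩ rfl rfl
  · have := Nat.eq_of_div_eq_of_mod_eq (Nat.add_right_cancel hdiv) hmod
    omega
  · rw [show (c : ℕ) - M = t by omega]
    exact ⟨by omega, rfl, rfl⟩

end alignmentBlock

/-- The effective channel matrix `G` of one alignment block at a receiver of the
`K`-user `M×1` MISO BC: rows `1, …, M−1` are `[h_r | e_rᵀ | ⋯ | e_rᵀ]`, the next
`K−1` blocks of `M−1` rows carry the identity `I_{M−1}` in the corresponding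
trailing block, and the last row is `[h_M | 0 | ⋯ | 0]`. If `h₁, …, h_M` are
linearly independent then `G` has full column rank `M + (K−1)(M−1)`. -/
theorem K_user_Mx1_MISO_BC_alignment_block_full_column_rank (M K : ℕ)
    (hM : 2 ≤ M) (hK : 2 ≤ K)
    (h : Fin M → Fin M → ℂ) (hli : LinearIndependent ℂ h)
    (G : Matrix (Fin (K * (M - 1) + 1)) (Fin (M + (K - 1) * (M - 1))) ℂ)
    (hG : ∀ (r : Fin (K * (M - 1) + 1)) (c : Fin (M + (K - 1) * (M - 1))),
      G r c =
        if hr : (r : ℕ) < M - 1 then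
          (if hc : (c : ℕ) < M then h ⟨(r : ℕ), by omega⟩ ⟨(c : ℕ), hc⟩
           else (if ((c : ℕ) - M) % (M - 1) = (r : ℕ) then 1 else 0))
        else if hr2 : (r : ℕ) < K * (M - 1) then
          (if M ≤ (c : ℕ) ∧ ((c : ℕ) - M) / (M - 1) + 1 = (r : ℕ) / (M - 1) ∧
              ((c : ℕ) - M) % (M - 1) = (r : ℕ) % (M - 1)
           then 1 else 0)
        else
          (if hc : (c : ℕ) < M then h ⟨M - 1, by omega⟩ ⟨(c : ℕ), hc⟩ else 0)) :
    G.rank = M + (K - 1) * (M - 1) := by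
  obtain rfl : G = alignmentBlock M K h := Matrix.ext hG
  have hK₁ : 1 ≤ K := by omega
  have hdesired : (alignmentBlock M K h).submatrix (alignmentBlock.desiredRow hK₁)
      (Fin.castAdd _) = Matrix.of h :=
    Matrix.ext (alignmentBlock.apply_desiredRow_castAdd hK₁ h)
  have hh : Function.Injective (Matrix.of h).mulVec :=
    Matrix.mulVec_injective_iff_isUnit.2 (Matrix.linearIndependent_rows_iff_isUnit.1 hli)
  have hG_inj : Function.Injective (alignmentBlock M K h).mulVec :=
    Matrix.mulVec_injective_of_rows_eq_single _ _ (hdesired ▸ hh) _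
      (alignmentBlock.interferenceRow_eq_single h)
  rw [Matrix.rank_eq_card_of_mulVec_injective hG_inj, Fintype.card_fin]
end
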